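/- arXiv:1006.1723 — 4 statements merged into one kernel-verified Lean document; each statement's English description precedes it below -/
import Mathlib

section
/- Let k ≥ 2 and 1 ≤ m ≤ k−1, and let (k_1,…,k_m) be an ordered partition of k into positive integers (k_1+⋯+k_m = k). Let X_{k_1,…,k_m} be the set of m×k matrices D with entries in {0,1,−1} such that every column of D has exactly one nonzero entry, row i has exactly k_i nonzero entries for each 1 ≤ i ≤ m, the first (leftmost) nonzero entry of every row equals +1, and the column indices of the first nonzero entries of the rows are strictly increasing in the row index. Then the cardinality of X_{k_1,…,k_m} equals 2^{k−m} · ∏_{i=1}^{m−1} C(k − Σ_{j=1}^{i−1} k_j − 1, k_i − 1), where C(a,b) is the binomial coefficient, the empty product is 1 and the empty sum is 0. -/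
open Finset

def goodT (K : ℕ) (s : Finset (Fin K)) (m : ℕ) (ki : ℕ → ℕ) :
    Finset (Fin m → Finset (Fin K)) :=
  univ.filter (fun B =>
    (∀ i, B i ⊆ s) ∧
    (∀ i j, i ≠ j → Disjoint (B i) (B j)) ∧
    (∀ x ∈ s, ∃ i, x ∈ B i) ∧
    (∀ i, (B i).card = ki i) ∧
    (∀ i j : Fin m, i < j → (B i).min < (B j).min))

lemma mem_goodT {K : ℕ} {s : Finset (Fin K)} {m : ℕ} {ki : ℕ → ℕ}
    {B : Fin m → Finset (Fin K)} :
    B ∈ goodT K s m ki ↔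
      (∀ i, B i ⊆ s) ∧
      (∀ i j, i ≠ j → Disjoint (B i) (B j)) ∧
      (∀ x ∈ s, ∃ i, x ∈ B i) ∧
      (∀ i, (B i).card = ki i) ∧
      (∀ i j : Fin m, i < j → (B i).min < (B j).min) := by
  simp [goodT]

lemma goodT_card (K : ℕ) (m : ℕ) : ∀ (s : Finset (Fin K)) (ki : ℕ → ℕ),
    (∀ i < m, 0 < ki i) → (∑ i ∈ range m, ki i = s.card) →
    (goodT K s m ki).card =
      ∏ i ∈ range m, (s.card - (∑ j ∈ range i, ki j) - 1).choose (ki i - 1) := by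
  induction m with
  | zero =>
    intro s ki _ hsum
    simp only [range_zero, sum_empty] at hsum
    have hs : s = ∅ := by
      rw [← Finset.card_eq_zero]; omega
    rw [prod_range_zero]
    rw [Finset.card_eq_one]
    refine ⟨fun i => Fin.elim0 i, ?_⟩
    apply Finset.eq_singleton_iff_unique_mem.mpr
    constructor
    · rw [mem_goodT]
      refine ⟨fun i => i.elim0, fun i => i.elim0, ?_, fun i => i.elim0, fun i => i.elim0⟩
      intro x hx
      rw [hs] at hx; exact absurd hx (Finset.notMem_empty x)
    · intro B _; funext i; exact i.elim0
  | succ m ih =>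
    intro s ki hpos hsum
    have hk0 : 0 < ki 0 := hpos 0 (Nat.succ_pos m)
    have hk0le : ki 0 ≤ s.card := by
      rw [← hsum, Finset.sum_range_succ']
      omega
    have hs : s.Nonempty := by
      rw [← Finset.card_pos]; omega
    set x := s.min' hs with hxdef
    have hxs : x ∈ s := s.min'_mem hs
    -- for B in goodT, x ∈ B 0
    have hxB0 : ∀ B ∈ goodT K s (m+1) ki, x ∈ B 0 ∧ (B 0).min = (x : WithTop (Fin K)) := by
      intro B hB
      rw [mem_goodT] at hB
      obtain ⟨hsub, hdisj, hcov, hcard, hmin⟩ := hB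
      obtain ⟨i, hxi⟩ := hcov x hxs
      have h1 : (B i).min ≤ (x : WithTop (Fin K)) := Finset.min_le hxi
      have h0 : (B 0).min ≤ (x : WithTop (Fin K)) := by
        rcases eq_or_lt_of_le (Fin.zero_le i) with h | h
        · rw [← h] at hxi; exact Finset.min_le hxi
        · exact le_of_lt (lt_of_lt_of_le (hmin 0 i h) h1)
      have hB0ne : (B 0).Nonempty := by
        rw [← Finset.card_pos, hcard 0]; exact hk0
      have h2 : (x : WithTop (Fin K)) ≤ (B 0).min := by
        apply Finset.le_min
        intro b hb
        exact WithTop.coe_le_coe.mpr (s.min'_le b (hsub 0 hb))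
      have hmin0 : (B 0).min = (x : WithTop (Fin K)) := le_antisymm h0 h2
      constructor
      · have := Finset.coe_min' hB0ne
        rw [hmin0] at this
        have : (B 0).min' hB0ne = x := by exact_mod_cast this
        rw [← this]; exact Finset.min'_mem _ _
      · exact hmin0
    have key : (goodT K s (m+1) ki).card =
        (((s.erase x).powersetCard (ki 0 - 1)).sigma
          (fun c => goodT K (s \ insert x c) m (fun i => ki (i+1)))).card := by
      apply Finset.card_bij
        (fun B _ => (⟨(B 0).erase x, fun i => B i.succ⟩ :
          Σ _ : Finset (Fin K), (Fin m → Finset (Fin K))))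
      · -- maps into
        intro B hB
        obtain ⟨hx0, hmin0⟩ := hxB0 B hB
        rw [mem_goodT] at hB
        obtain ⟨hsub, hdisj, hcov, hcard, hmin⟩ := hB
        have hins : insert x ((B 0).erase x) = B 0 := Finset.insert_erase hx0
        rw [Finset.mem_sigma]
        constructor
        · rw [Finset.mem_powersetCard]
          exact ⟨Finset.erase_subset_erase x (hsub 0),
            by rw [Finset.card_erase_of_mem hx0, hcard 0]; simp⟩
        · rw [mem_goodT]
          rw [hins]
          refine ⟨?_, ?_, ?_, ?_, ?_⟩
          · intro i
            apply Finset.subset_sdiff.mpr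
            exact ⟨hsub i.succ, (hdisj i.succ 0 (Fin.succ_ne_zero i)).symm.symm⟩
          · intro i j hij
            exact hdisj i.succ j.succ (by simpa using hij)
          · intro y hy
            rw [Finset.mem_sdiff] at hy
            obtain ⟨i, hyi⟩ := hcov y hy.1
            have hi0 : i ≠ 0 := by rintro rfl; exact hy.2 hyi
            obtain ⟨j, rfl⟩ := Fin.eq_succ_of_ne_zero hi0
            exact ⟨j, hyi⟩
          · intro i; exact hcard i.succ
          · intro i j hij
            exact hmin i.succ j.succ (by simpa using hij)
      · -- injective
        intro B hB B' hB' heq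
        injection heq with h1 h2
        have h2' : (fun i : Fin m => B i.succ) = (fun i : Fin m => B' i.succ) := h2
        have hx0 := (hxB0 B hB).1
        have hx0' := (hxB0 B' hB').1
        funext i
        rcases Fin.eq_zero_or_eq_succ i with rfl | ⟨j, rfl⟩
        · rw [← Finset.insert_erase hx0, ← Finset.insert_erase hx0', h1]
        · exact congrFun h2' j
      · -- surjective
        intro p hp
        obtain ⟨c, g⟩ := p
        rw [Finset.mem_sigma] at hp
        obtain ⟨hc, hg⟩ := hp
        rw [Finset.mem_powersetCard] at hc
        obtain ⟨hcsub, hccard⟩ := hc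
        rw [mem_goodT] at hg
        obtain ⟨gsub, gdisj, gcov, gcard, gmin⟩ := hg
        have hxc : x ∉ c := fun h => (Finset.mem_erase.mp (hcsub h)).1 rfl
        have hinssub : insert x c ⊆ s :=
          Finset.insert_subset hxs (hcsub.trans (Finset.erase_subset x s))
        set B : Fin (m+1) → Finset (Fin K) := Fin.cases (insert x c) g with hBdef
        have hB0 : B 0 = insert x c := rfl
        have hBsucc : ∀ j : Fin m, B j.succ = g j := fun j => rfl
        have hdisj0 : ∀ j : Fin m, Disjoint (insert x c) (g j) := by
          intro j
          have := (Finset.subset_sdiff.mp (gsub j)).2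
          exact this.symm
        refine ⟨B, ?_, ?_⟩
        · rw [mem_goodT]
          refine ⟨?_, ?_, ?_, ?_, ?_⟩
          · intro i
            rcases Fin.eq_zero_or_eq_succ i with rfl | ⟨j, rfl⟩
            · exact hinssub
            · exact (gsub j).trans (Finset.sdiff_subset)
          · intro i j hij
            rcases Fin.eq_zero_or_eq_succ i with rfl | ⟨i', rfl⟩ <;>
              rcases Fin.eq_zero_or_eq_succ j with rfl | ⟨j', rfl⟩
            · exact absurd rfl hij
            · exact hdisj0 j'
            · exact (hdisj0 i').symm
            · exact gdisj i' j' (by simpa using hij)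
          · intro y hy
            by_cases hyc : y ∈ insert x c
            · exact ⟨0, hyc⟩
            · obtain ⟨j, hj⟩ := gcov y (Finset.mem_sdiff.mpr ⟨hy, hyc⟩)
              exact ⟨j.succ, hj⟩
          · intro i
            rcases Fin.eq_zero_or_eq_succ i with rfl | ⟨j, rfl⟩
            · rw [hB0, Finset.card_insert_of_notMem hxc, hccard]
              simp only [Fin.val_zero]
              omega
            · exact gcard j
          · -- mins
            have hminB0 : (B 0).min = (x : WithTop (Fin K)) := by
              apply le_antisymm
              · exact Finset.min_le (Finset.mem_insert_self x c)
              · apply Finset.le_min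
                intro b hb
                exact WithTop.coe_le_coe.mpr (s.min'_le b (hinssub hb))
            have hminsucc : ∀ j : Fin m, (x : WithTop (Fin K)) < (B j.succ).min := by
              intro j
              have hne : (g j).Nonempty := by
                rw [← Finset.card_pos, gcard j]
                exact hpos (j+1) (by omega)
              have hmem := Finset.min'_mem (g j) hne
              have hmem' := gsub j hmem
              rw [Finset.mem_sdiff] at hmem'
              have hgt : x < (g j).min' hne := by
                rcases lt_or_eq_of_le (s.min'_le _ hmem'.1) with h | h
                · exact h
                · exact absurd (h ▸ Finset.mem_insert_self x c) hmem'.2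
              rw [hBsucc, ← Finset.coe_min' hne]
              exact WithTop.coe_lt_coe.mpr hgt
            intro i j hij
            rcases Fin.eq_zero_or_eq_succ i with rfl | ⟨i', rfl⟩ <;>
              rcases Fin.eq_zero_or_eq_succ j with rfl | ⟨j', rfl⟩
            · exact absurd hij (lt_irrefl 0)
            · rw [hminB0]; exact hminsucc j'
            · exact absurd hij (by simp [Fin.lt_iff_val_lt_val])
            · exact gmin i' j' (by simpa using hij)
        · apply Sigma.ext
          · rw [hB0, Finset.erase_insert hxc]
          · exact heq_of_eq (funext fun j => rfl)
    rw [key, Finset.card_sigma]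
    have hfiber : ∀ c ∈ (s.erase x).powersetCard (ki 0 - 1),
        (goodT K (s \ insert x c) m (fun i => ki (i+1))).card =
        ∏ i ∈ range m,
          ((s.card - ki 0) - (∑ j ∈ range i, ki (j+1)) - 1).choose (ki (i+1) - 1) := by
      intro c hc
      rw [Finset.mem_powersetCard] at hc
      obtain ⟨hcsub, hccard⟩ := hc
      have hxc : x ∉ c := fun h => (Finset.mem_erase.mp (hcsub h)).1 rfl
      have hinssub : insert x c ⊆ s :=
        Finset.insert_subset hxs (hcsub.trans (Finset.erase_subset x s))
      have hcardsd : (s \ insert x c).card = s.card - ki 0 := by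
        rw [Finset.card_sdiff_of_subset hinssub, Finset.card_insert_of_notMem hxc, hccard]
        congr 1
        omega
      have hsum2 : ∑ i ∈ range m, ki (i+1) = s.card - ki 0 := by
        rw [Finset.sum_range_succ'] at hsum; omega
      rw [ih (s \ insert x c) (fun i => ki (i+1)) (fun i hi => hpos (i+1) (by omega))
        (by rw [hcardsd]; exact hsum2), hcardsd]
    rw [Finset.sum_congr rfl hfiber, Finset.sum_const, Finset.card_powersetCard,
      Finset.card_erase_of_mem hxs, smul_eq_mul]
    rw [Finset.prod_range_succ']
    have hterm : ∀ i ∈ range m,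
        ((s.card - ki 0) - (∑ j ∈ range i, ki (j+1)) - 1).choose (ki (i+1) - 1) =
        (s.card - (∑ j ∈ range (i+1), ki j) - 1).choose (ki (i+1) - 1) := by
      intro i _
      congr 1
      rw [Finset.sum_range_succ']
      omega
    rw [Finset.prod_congr rfl hterm]
    simp only [range_zero, sum_empty, Nat.sub_zero]
    ring

lemma card_signs (k : ℕ) (M : Finset (Fin k)) :
    (univ.filter (fun ε : Fin k → Bool => ∀ j ∈ M, ε j = true)).card = 2 ^ (k - M.card) := by
  have e : {ε : Fin k → Bool // ∀ j ∈ M, ε j = true} ≃ ({j : Fin k // j ∉ M} → Bool) :=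
    { toFun := fun ε j => ε.1 j.1
      invFun := fun g => ⟨fun j => if h : j ∈ M then true else g ⟨j, h⟩,
        fun j hj => by simp [hj]⟩
      left_inv := by
        intro ε
        apply Subtype.ext
        funext j
        by_cases h : j ∈ M
        · simp [h, ε.2 j h]
        · simp [h]
      right_inv := by
        intro g
        funext j
        simp [j.2] }
  have h1 := Fintype.card_congr e
  rw [Fintype.card_subtype] at h1
  rw [h1, Fintype.card_fun, Fintype.card_bool, Fintype.card_subtype_compl,
    Fintype.card_coe, Fintype.card_fin]

lemma signs_card {k m : ℕ} {ki : ℕ → ℕ} (hpos : ∀ i < m, 0 < ki i)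
    {B : Fin m → Finset (Fin k)} (hB : B ∈ goodT k univ m ki) :
    (univ.filter fun ε : Fin k → Bool =>
        ∀ i, ∀ j ∈ B i, (∀ j' ∈ B i, j ≤ j') → ε j = true).card = 2 ^ (k - m) := by
  rw [mem_goodT] at hB
  obtain ⟨hsub, hdisj, hcov, hcard, hmin⟩ := hB
  have hne : ∀ i : Fin m, (B i).Nonempty := by
    intro i
    rw [← Finset.card_pos, hcard i]
    exact hpos i.1 i.2
  set ν : Fin m → Fin k := fun i => (B i).min' (hne i) with hνdef
  have hν : StrictMono ν := by
    intro i j hij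
    have := hmin i j hij
    rw [← Finset.coe_min' (hne i), ← Finset.coe_min' (hne j)] at this
    exact_mod_cast this
  set M : Finset (Fin k) := Finset.image ν univ with hMdef
  have hfilt : (univ.filter fun ε : Fin k → Bool =>
      ∀ i, ∀ j ∈ B i, (∀ j' ∈ B i, j ≤ j') → ε j = true) =
      (univ.filter fun ε : Fin k → Bool => ∀ j ∈ M, ε j = true) := by
    apply Finset.filter_congr
    intro ε _
    constructor
    · intro h j hj
      rw [hMdef, Finset.mem_image] at hj
      obtain ⟨i, _, rfl⟩ := hj
      exact h i (ν i) (Finset.min'_mem _ _) (fun j' hj' => Finset.min'_le _ _ hj')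
    · intro h i j hj hjmin
      have h1 : j ≤ ν i := hjmin (ν i) (Finset.min'_mem _ _)
      have h2 : ν i ≤ j := Finset.min'_le _ _ hj
      have : j = ν i := le_antisymm h1 h2
      apply h
      rw [this, hMdef, Finset.mem_image]
      exact ⟨i, Finset.mem_univ i, rfl⟩
  rw [hfilt, card_signs]
  congr 1
  rw [hMdef, Finset.card_image_of_injective _ hν.injective, Finset.card_univ,
    Fintype.card_fin]

/-- The cardinality of the set `X_{k_1,…,k_m}` of `m × k` matrices with entries
in `{0, 1, -1}`, exactly one nonzero entry in each column, exactly `k_i` nonzero entries in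
row `i`, whose first nonzero entry in each row is `+1`, and whose columns of first nonzero
entries are strictly increasing in the row index, equals
`2^(k-m) * ∏_{i=1}^{m-1} C(k - k_1 - ⋯ - k_{i-1} - 1, k_i - 1)`. -/
theorem epstein_admissible_matrix_count
    (k m : ℕ) (hk : 2 ≤ k) (hm1 : 1 ≤ m) (hmk : m ≤ k - 1)
    (ki : ℕ → ℕ) (hpos : ∀ i < m, 0 < ki i)
    (hsum : ∑ i ∈ Finset.range m, ki i = k) :
    Set.ncard {D : Matrix (Fin m) (Fin k) ℤ |
      (∀ i j, D i j = 0 ∨ D i j = 1 ∨ D i j = -1) ∧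
      (∀ j, ∃! i, D i j ≠ 0) ∧
      (∀ i : Fin m, (Finset.univ.filter fun j => D i j ≠ 0).card = ki i) ∧
      (∃ ν : Fin m → Fin k, StrictMono ν ∧
        ∀ i : Fin m, D i (ν i) = 1 ∧ ∀ j : Fin k, j < ν i → D i j = 0)} =
    2 ^ (k - m) * ∏ i ∈ Finset.range (m - 1),
      Nat.choose (k - (∑ j ∈ Finset.range i, ki j) - 1) (ki i - 1) := by
  classical
  set Ψ : (Σ _ : Fin m → Finset (Fin k), Fin k → Bool) → Matrix (Fin m) (Fin k) ℤ :=
    fun p => fun i j => if j ∈ p.1 i then (if p.2 j then (1:ℤ) else -1) else 0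
    with hΨdef
  set Y : Finset (Σ _ : Fin m → Finset (Fin k), Fin k → Bool) :=
    (goodT k univ m ki).sigma (fun B => univ.filter (fun ε : Fin k → Bool =>
      ∀ i, ∀ j ∈ B i, (∀ j' ∈ B i, j ≤ j') → ε j = true)) with hYdef
  have hΨne : ∀ (B : Fin m → Finset (Fin k)) (ε : Fin k → Bool) (i : Fin m) (j : Fin k),
      (Ψ ⟨B, ε⟩ i j ≠ 0 ↔ j ∈ B i) := by
    intro B ε i j
    by_cases h : j ∈ B i
    · cases hε : ε j <;> simp [hΨdef, h, hε]
    · simp [hΨdef, h]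
  have hmemY : ∀ (B : Fin m → Finset (Fin k)) (ε : Fin k → Bool),
      (⟨B, ε⟩ : Σ _ : Fin m → Finset (Fin k), Fin k → Bool) ∈ Y ↔
        B ∈ goodT k univ m ki ∧
        (∀ i, ∀ j ∈ B i, (∀ j' ∈ B i, j ≤ j') → ε j = true) := by
    intro B ε
    rw [hYdef, Finset.mem_sigma, Finset.mem_filter]
    simp
  have himage : {D : Matrix (Fin m) (Fin k) ℤ |
      (∀ i j, D i j = 0 ∨ D i j = 1 ∨ D i j = -1) ∧
      (∀ j, ∃! i, D i j ≠ 0) ∧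
      (∀ i : Fin m, (Finset.univ.filter fun j => D i j ≠ 0).card = ki i) ∧
      (∃ ν : Fin m → Fin k, StrictMono ν ∧
        ∀ i : Fin m, D i (ν i) = 1 ∧ ∀ j : Fin k, j < ν i → D i j = 0)} = Ψ '' ↑Y := by
    ext D
    simp only [Set.mem_setOf_eq, Set.mem_image, Finset.mem_coe]
    constructor
    · rintro ⟨hent, huniq, hcards, ν, hν, hν1⟩
      set B : Fin m → Finset (Fin k) := fun i => univ.filter (fun j => D i j ≠ 0) with hBdef
      set ε : Fin k → Bool := fun j => decide (∃ i, D i j = 1) with hεdef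
      have hmemB : ∀ i j, j ∈ B i ↔ D i j ≠ 0 := by
        intro i j; rw [hBdef]; simp
      have hνmem : ∀ i, ν i ∈ B i := by
        intro i; rw [hmemB, (hν1 i).1]; exact one_ne_zero
      have hνle : ∀ i, ∀ j ∈ B i, ν i ≤ j := by
        intro i j hj
        by_contra h
        exact (hmemB i j).mp hj ((hν1 i).2 j (lt_of_not_ge h))
      have hBne : ∀ i, (B i).Nonempty := fun i => ⟨ν i, hνmem i⟩
      have hmin' : ∀ i, (B i).min' (hBne i) = ν i := by
        intro i
        exact le_antisymm (Finset.min'_le _ _ (hνmem i))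
          (Finset.le_min' _ _ _ (hνle i))
      refine ⟨⟨B, ε⟩, ?_, ?_⟩
      · rw [hmemY]
        constructor
        · rw [mem_goodT]
          refine ⟨fun i => Finset.subset_univ _, ?_, ?_, ?_, ?_⟩
          · intro i j hij
            rw [Finset.disjoint_left]
            intro a hai haj
            obtain ⟨i0, -, hi0⟩ := huniq a
            exact hij ((hi0 i ((hmemB i a).mp hai)).trans
              (hi0 j ((hmemB j a).mp haj)).symm)
          · intro x _
            obtain ⟨i, hi, -⟩ := huniq x
            exact ⟨i, (hmemB i x).mpr hi⟩
          · intro i; exact hcards i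
          · intro i j hij
            rw [← Finset.coe_min' (hBne i), ← Finset.coe_min' (hBne j), hmin' i, hmin' j]
            exact WithTop.coe_lt_coe.mpr (hν hij)
        · intro i j hj hjmin
          have h1 : j = ν i := le_antisymm (hjmin (ν i) (hνmem i)) (hνle i j hj)
          rw [hεdef, h1]
          simp only [decide_eq_true_eq]
          exact ⟨i, (hν1 i).1⟩
      · -- Ψ ⟨B, ε⟩ = D
        funext i j
        show (if j ∈ B i then if ε j = true then (1:ℤ) else -1 else 0) = D i j
        by_cases h : j ∈ B i
        · have hD : D i j ≠ 0 := (hmemB i j).mp h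
          rw [if_pos h]
          by_cases hε1 : ∃ i', D i' j = 1
          · have hεj : ε j = true := by rw [hεdef]; exact decide_eq_true hε1
            obtain ⟨i', hi'⟩ := hε1
            obtain ⟨i0, -, hi0⟩ := huniq j
            have h1 : i' = i0 := hi0 i' (show D i' j ≠ 0 by rw [hi']; exact one_ne_zero)
            have h2 : i = i0 := hi0 i hD
            rw [if_pos hεj, h2, ← h1, hi']
          · have hεj : ε j = false := by rw [hεdef]; exact decide_eq_false hε1
            have hD1 : D i j = -1 := by
              rcases hent i j with h0 | h1 | hm
              · exact absurd h0 hD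
              · exact absurd ⟨i, h1⟩ hε1
              · exact hm
            rw [if_neg (by rw [hεj]; exact Bool.false_ne_true), hD1]
        · rw [if_neg h]
          by_contra hne
          exact h ((hmemB i j).mpr (Ne.symm hne))
    · rintro ⟨⟨B, ε⟩, hp, rfl⟩
      rw [hmemY] at hp
      obtain ⟨hBg, hεg⟩ := hp
      rw [mem_goodT] at hBg
      obtain ⟨-, hdisj, hcov, hcard, hmin⟩ := hBg
      have hBne : ∀ i, (B i).Nonempty := by
        intro i
        rw [← Finset.card_pos, hcard i]
        exact hpos i.1 i.2
      refine ⟨?_, ?_, ?_, ?_⟩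
      · intro i j
        rw [hΨdef]
        by_cases h : j ∈ B i
        · cases hε : ε j <;> simp [h, hε]
        · simp [h]
      · intro j
        obtain ⟨i, hi⟩ := hcov j (Finset.mem_univ j)
        refine ⟨i, (hΨne B ε i j).mpr hi, ?_⟩
        intro i' hi'
        by_contra hne
        exact Finset.disjoint_left.mp (hdisj i' i hne) ((hΨne B ε i' j).mp hi') hi
      · intro i
        rw [← hcard i]
        congr 1
        ext j
        simp only [Finset.mem_filter, Finset.mem_univ, true_and]
        exact hΨne B ε i j
      · refine ⟨fun i => (B i).min' (hBne i), ?_, ?_⟩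
        · intro i j hij
          have := hmin i j hij
          rw [← Finset.coe_min' (hBne i), ← Finset.coe_min' (hBne j)] at this
          exact_mod_cast this
        · intro i
          constructor
          · have hmem := Finset.min'_mem (B i) (hBne i)
            have hε := hεg i _ hmem (fun j' hj' => Finset.min'_le _ _ hj')
            rw [hΨdef]
            simp [hmem, hε]
          · intro j hj
            have : j ∉ B i := fun h => absurd (Finset.min'_le _ _ h) (not_le.mpr hj)
            rw [hΨdef]
            simp [this]
  have hinj : Set.InjOn Ψ ↑Y := by
    rintro ⟨B, ε⟩ hp ⟨B', ε'⟩ hq heq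
    rw [Finset.mem_coe, hmemY] at hp hq
    obtain ⟨hBg, -⟩ := hp
    obtain ⟨hBg', -⟩ := hq
    have hBB : B = B' := by
      funext i
      ext j
      rw [← hΨne B ε i j, ← hΨne B' ε' i j, heq]
    subst hBB
    have hεε : ε = ε' := by
      funext j
      obtain ⟨i, hi⟩ := (mem_goodT.mp hBg).2.2.1 j (Finset.mem_univ j)
      have h1 : Ψ ⟨B, ε⟩ i j = Ψ ⟨B, ε'⟩ i j := by rw [heq]
      rw [hΨdef] at h1
      simp only [if_pos hi] at h1
      cases hε : ε j <;> cases hε' : ε' j <;>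
        first
        | rfl
        | (exfalso; simp [hε, hε'] at h1)
    rw [hεε]
  rw [himage, Set.ncard_image_of_injOn hinj, Set.ncard_coe_finset]
  have hYcard : Y.card = (goodT k univ m ki).card * 2 ^ (k - m) := by
    rw [hYdef, Finset.card_sigma,
      Finset.sum_congr rfl (fun B hB => signs_card hpos hB), Finset.sum_const, smul_eq_mul]
  have hBcard := goodT_card k m univ ki hpos
    (by rw [Finset.card_univ, Fintype.card_fin]; exact hsum)
  rw [Finset.card_univ, Fintype.card_fin] at hBcard
  obtain ⟨m', rfl⟩ : ∃ m', m = m' + 1 := ⟨m - 1, by omega⟩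
  have hS : (∑ j ∈ range m', ki j) + ki m' = k := by
    rw [← Finset.sum_range_succ]; exact hsum
  have hkim' : 0 < ki m' := hpos m' (by omega)
  have hlast : k - (∑ j ∈ range m', ki j) - 1 = ki m' - 1 := by omega
  rw [Finset.prod_range_succ, hlast, Nat.choose_self, mul_one] at hBcard
  rw [hYcard, hBcard, Nat.add_sub_cancel, mul_comm]
end

section
/- Let c > 1/2 and δ > 0 be fixed. For k ≥ 1 define a_k = 2^k · Σ_{P ∈ 𝒫(k)} 2^{−#P} · δ^{#P − 2kc} · ∏_{B ∈ P} 1/(2c·#B − 1). If μ and ν are Borel probability measures on ℝ, each supported on the nonnegative real line, such that for every k ≥ 1 the k-th moments exist and satisfy ∫ x^k dμ(x) = a_k and ∫ x^k dν(x) = a_k, then μ = ν. (In other words, the moment sequence (a_k)_{k≥1} determines a unique probability measure on the positive real line.) -/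
open MeasureTheory

def IsSetPartition {k : ℕ} (Q : Finset (Finset (Fin k))) : Prop :=
  (∀ B ∈ Q, B.Nonempty) ∧ ∀ x : Fin k, ∃! B, B ∈ Q ∧ x ∈ B

open scoped Classical in
/-- The moment `a_k = 2^k ∑_{P ∈ 𝒫(k)} 2^{-#P} δ^{#P - 2kc} ∏_{B ∈ P} (2c·#B - 1)⁻¹` of the
truncated random Dirichlet series `T(c,δ)`. -/
noncomputable def truncMoment (c δ : ℝ) (k : ℕ) : ℝ :=
  2 ^ k * ∑ Q : Finset (Finset (Fin k)),
    if IsSetPartition Q then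
      ((2 : ℝ) ^ Q.card)⁻¹ * δ ^ ((Q.card : ℝ) - 2 * k * c) *
        ∏ B ∈ Q, 1 / (2 * c * (B.card : ℝ) - 1)
    else 0

/-!
Each of the at most `k ^ k` set partitions of `{1,…,k}` (a partition is determined by the map
sending a point to the minimum of its block) contributes at most `D ^ k` to `a_k / 2 ^ k`, with
`D` depending only on `c` and `δ`, so `a_k ≤ C ^ k * k!`. For a measure on `[0, ∞)` with these
moments, monotone convergence gives `∫ exp (t x) = ∑ t ^ k a_k / k! < ∞` for `t < 1 / C`, so `0`
is interior to the domain of the moment generating function. The complex moment generating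
function is then analytic on a vertical strip containing the imaginary axis, with the moments as
Taylor coefficients at `0`; two such functions with equal moments agree on the whole strip, in
particular on the imaginary axis, where they are the characteristic functions.
-/
open Finset ProbabilityTheory Topology
open scoped Nat

section SetPartition

variable {k : ℕ} {Q : Finset (Finset (Fin k))} {B : Finset (Fin k)} {x y : Fin k}

def blockOf (Q : Finset (Finset (Fin k))) (x : Fin k) : Finset (Fin k) :=
  (Q.filter (x ∈ ·)).sup id

/-- On a set partition `insert x` does nothing, since `x ∈ blockOf Q x`; it only makes `min'`
total. -/
noncomputable def blockMin (Q : Finset (Finset (Fin k))) (x : Fin k) : Fin k :=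
  (insert x (blockOf Q x)).min' (insert_nonempty _ _)

namespace IsSetPartition

lemma blockOf_eq (hQ : IsSetPartition Q) (hB : B ∈ Q) (hx : x ∈ B) : blockOf Q x = B := by
  have : Q.filter (x ∈ ·) = {B} := eq_singleton_iff_unique_mem.2
    ⟨mem_filter.2 ⟨hB, hx⟩, fun C hC => (hQ.2 x).unique (mem_filter.1 hC) ⟨hB, hx⟩⟩
  rw [blockOf, this, sup_singleton, id]

lemma blockOf_mem (hQ : IsSetPartition Q) (x : Fin k) : blockOf Q x ∈ Q := by
  obtain ⟨B, ⟨hB, hx⟩, -⟩ := hQ.2 x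
  rwa [hQ.blockOf_eq hB hx]

lemma mem_blockOf (hQ : IsSetPartition Q) (x : Fin k) : x ∈ blockOf Q x := by
  obtain ⟨B, ⟨hB, hx⟩, -⟩ := hQ.2 x
  rwa [hQ.blockOf_eq hB hx]

lemma blockOf_eq_of_mem (hQ : IsSetPartition Q) (hy : y ∈ blockOf Q x) :
    blockOf Q y = blockOf Q x :=
  hQ.blockOf_eq (hQ.blockOf_mem x) hy

lemma blockMin_mem (hQ : IsSetPartition Q) (x : Fin k) : blockMin Q x ∈ blockOf Q x := by
  rcases mem_insert.1 (min'_mem _ (insert_nonempty x (blockOf Q x))) with h | h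
  · rw [blockMin, h]
    exact hQ.mem_blockOf x
  · exact h

lemma mem_blockOf_iff (hQ : IsSetPartition Q) :
    y ∈ blockOf Q x ↔ blockMin Q y = blockMin Q x := by
  constructor
  · intro hy
    simp only [blockMin, hQ.blockOf_eq_of_mem hy, insert_eq_of_mem hy,
      insert_eq_of_mem (hQ.mem_blockOf x)]
  · intro h
    have hmy := hQ.blockMin_mem y
    rw [h] at hmy
    rw [← hQ.blockOf_eq_of_mem (hQ.blockMin_mem x), hQ.blockOf_eq_of_mem hmy]
    exact hQ.mem_blockOf y

lemma image_blockOf (hQ : IsSetPartition Q) : univ.image (blockOf Q) = Q := by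
  ext B
  simp only [mem_image, mem_univ, true_and]
  constructor
  · rintro ⟨x, rfl⟩
    exact hQ.blockOf_mem x
  · intro hB
    obtain ⟨x, hx⟩ := hQ.1 B hB
    exact ⟨x, hQ.blockOf_eq hB hx⟩

lemma card_le (hQ : IsSetPartition Q) : #Q ≤ k := by
  simpa [hQ.image_blockOf] using card_image_le (s := univ) (f := blockOf Q)

end IsSetPartition

lemma injOn_blockMin : Set.InjOn blockMin {Q : Finset (Finset (Fin k)) | IsSetPartition Q} := by
  intro Q hQ Q' hQ' h
  rw [← IsSetPartition.image_blockOf hQ, ← IsSetPartition.image_blockOf hQ']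
  congr 1
  ext x y
  rw [IsSetPartition.mem_blockOf_iff hQ, IsSetPartition.mem_blockOf_iff hQ', h]

open scoped Classical in
lemma card_setPartitions_le (k : ℕ) :
    #{Q : Finset (Finset (Fin k)) | IsSetPartition Q} ≤ k ^ k := by
  simpa using card_le_card_of_injOn (t := univ) blockMin (fun _ _ => mem_univ _)
    (by simpa using injOn_blockMin)

end SetPartition

section Bound

variable {c δ : ℝ}

lemma truncMoment_summand_le (hc : 1 / 2 < c) (hδ : 0 < δ) {k : ℕ} {Q : Finset (Finset (Fin k))}
    (hQ : IsSetPartition Q) :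
    ((2 : ℝ) ^ #Q)⁻¹ * δ ^ ((#Q : ℝ) - 2 * k * c) * ∏ B ∈ Q, 1 / (2 * c * (#B : ℝ) - 1)
      ≤ (max 1 δ * δ ^ (-(2 * c)) * max 1 (2 * c - 1)⁻¹) ^ k := by
  have hblock : ∀ B ∈ Q, 2 * c - 1 ≤ 2 * c * (#B : ℝ) - 1 := fun B hB => by
    have : (1 : ℝ) ≤ #B := by exact_mod_cast (hQ.1 B hB).card_pos
    nlinarith
  have hpow : δ ^ ((#Q : ℝ) - 2 * k * c) ≤ max 1 δ ^ k * (δ ^ (-(2 * c))) ^ k := by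
    rw [sub_eq_add_neg, Real.rpow_add hδ, Real.rpow_natCast,
      show -(2 * (k : ℝ) * c) = -(2 * c) * k by ring, Real.rpow_mul_natCast hδ.le]
    have : δ ^ #Q ≤ max 1 δ ^ k := (pow_le_pow_left₀ hδ.le (le_max_right _ _) _).trans
      (pow_le_pow_right₀ (le_max_left _ _) hQ.card_le)
    exact mul_le_mul_of_nonneg_right this (by positivity)
  have hprod : ∏ B ∈ Q, 1 / (2 * c * (#B : ℝ) - 1) ≤ max 1 (2 * c - 1)⁻¹ ^ k := by
    calc ∏ B ∈ Q, 1 / (2 * c * (#B : ℝ) - 1) ≤ ∏ _B ∈ Q, max 1 (2 * c - 1)⁻¹ := by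
          refine prod_le_prod (fun B hB => ?_) fun B hB => ?_
          · exact one_div_nonneg.2 (by linarith [hblock B hB])
          · rw [one_div]
            exact (inv_anti₀ (by linarith) (hblock B hB)).trans (le_max_right _ _)
      _ ≤ max 1 (2 * c - 1)⁻¹ ^ k := by
          rw [prod_const]; exact pow_le_pow_right₀ (le_max_left _ _) hQ.card_le
  calc ((2 : ℝ) ^ #Q)⁻¹ * δ ^ ((#Q : ℝ) - 2 * k * c) * ∏ B ∈ Q, 1 / (2 * c * (#B : ℝ) - 1)
      ≤ 1 * (max 1 δ ^ k * (δ ^ (-(2 * c))) ^ k) * max 1 (2 * c - 1)⁻¹ ^ k := by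
        gcongr
        · exact prod_nonneg fun B hB => one_div_nonneg.2 (by linarith [hblock B hB])
        · exact inv_le_one_of_one_le₀ (one_le_pow₀ one_le_two)
    _ = (max 1 δ * δ ^ (-(2 * c)) * max 1 (2 * c - 1)⁻¹) ^ k := by ring

lemma truncMoment_le (hc : 1 / 2 < c) (hδ : 0 < δ) (k : ℕ) :
    truncMoment c δ k ≤ (2 * (max 1 δ * δ ^ (-(2 * c)) * max 1 (2 * c - 1)⁻¹)) ^ k * k ^ k := by
  classical
  set D := max 1 δ * δ ^ (-(2 * c)) * max 1 (2 * c - 1)⁻¹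
  have hsum : (∑ Q : Finset (Finset (Fin k)), if IsSetPartition Q then
        ((2 : ℝ) ^ #Q)⁻¹ * δ ^ ((#Q : ℝ) - 2 * k * c) * ∏ B ∈ Q, 1 / (2 * c * (#B : ℝ) - 1)
      else 0) ≤ k ^ k * D ^ k := by
    rw [← sum_filter]
    calc _ ≤ ∑ _Q ∈ univ.filter IsSetPartition, D ^ k :=
          sum_le_sum fun Q hQ => truncMoment_summand_le hc hδ (mem_filter.1 hQ).2
      _ ≤ k ^ k * D ^ k := by
          rw [sum_const, nsmul_eq_mul]
          gcongr
          exact_mod_cast card_setPartitions_le k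
  calc truncMoment c δ k ≤ 2 ^ k * (k ^ k * D ^ k) := by
        unfold truncMoment; gcongr
    _ = (2 * D) ^ k * k ^ k := by ring

lemma exists_truncMoment_le_pow_mul_factorial (hc : 1 / 2 < c) (hδ : 0 < δ) :
    ∃ C > 0, ∀ k : ℕ, truncMoment c δ k ≤ C ^ k * k ! := by
  set D := 2 * (max 1 δ * δ ^ (-(2 * c)) * max 1 (2 * c - 1)⁻¹)
  have hD : 0 < D := by positivity
  refine ⟨D * Real.exp 1, by positivity, fun k => ?_⟩
  have hk : (k : ℝ) ^ k ≤ Real.exp 1 ^ k * k ! := by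
    rw [← Real.exp_nat_mul, mul_one, ← div_le_iff₀ (by positivity)]
    exact Real.pow_div_factorial_le_exp _ (Nat.cast_nonneg k) k
  calc truncMoment c δ k ≤ D ^ k * k ^ k := truncMoment_le hc hδ k
    _ ≤ D ^ k * (Real.exp 1 ^ k * k !) := by gcongr
    _ = (D * Real.exp 1) ^ k * k ! := by ring

end Bound

section ExponentialMoments

variable {μ : Measure ℝ}

lemma lintegral_ofReal_exp_mul_eq_tsum (h0 : ∀ᵐ x ∂μ, 0 ≤ x)
    (hint : ∀ k : ℕ, Integrable (fun x : ℝ => x ^ k) μ) {t : ℝ} (ht : 0 ≤ t) :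
    ∫⁻ x, ENNReal.ofReal (Real.exp (t * x)) ∂μ
      = ∑' k : ℕ, ENNReal.ofReal (t ^ k / k ! * ∫ x, x ^ k ∂μ) := by
  have hterm : ∀ k : ℕ, ∫⁻ x, ENNReal.ofReal ((t * x) ^ k / k !) ∂μ
      = ENNReal.ofReal (t ^ k / k ! * ∫ x, x ^ k ∂μ) := fun k => by
    rw [← integral_const_mul, ofReal_integral_eq_lintegral_ofReal ((hint k).const_mul _)]
    · exact lintegral_congr fun x => by rw [mul_pow]; ring_nf
    · filter_upwards [h0] with x hx using by positivity
  calc ∫⁻ x, ENNReal.ofReal (Real.exp (t * x)) ∂μ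
      = ∫⁻ x, ∑' k : ℕ, ENNReal.ofReal ((t * x) ^ k / k !) ∂μ := by
        refine lintegral_congr_ae ?_
        filter_upwards [h0] with x hx
        rw [Real.exp_eq_exp_ℝ, NormedSpace.exp_eq_tsum_div, ENNReal.ofReal_tsum_of_nonneg
          (fun k => by positivity) (Real.summable_pow_div_factorial _)]
    _ = ∑' k : ℕ, ∫⁻ x, ENNReal.ofReal ((t * x) ^ k / k !) ∂μ :=
        lintegral_tsum fun k => by fun_prop
    _ = _ := tsum_congr hterm

lemma integrable_exp_mul_of_integral_pow_le [IsFiniteMeasure μ] (h0 : ∀ᵐ x ∂μ, 0 ≤ x)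
    (hint : ∀ k : ℕ, Integrable (fun x : ℝ => x ^ k) μ) {C : ℝ}
    (hmom : ∀ k : ℕ, ∫ x, x ^ k ∂μ ≤ C ^ k * k !) {t : ℝ} (htC : t * C < 1) :
    Integrable (fun x : ℝ => Real.exp (t * x)) μ := by
  rcases le_or_gt t 0 with ht | ht
  · refine Integrable.mono' (integrable_const 1) (by fun_prop) ?_
    filter_upwards [h0] with x hx
    rw [Real.norm_of_nonneg (Real.exp_nonneg _), Real.exp_le_one_iff]
    exact mul_nonpos_of_nonpos_of_nonneg ht hx
  refine ⟨by fun_prop,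
    (hasFiniteIntegral_iff_ofReal (ae_of_all _ fun x => (Real.exp_pos _).le)).2 ?_⟩
  rw [lintegral_ofReal_exp_mul_eq_tsum h0 hint ht.le]
  have hC : 0 ≤ C := (integral_nonneg_of_ae h0).trans (by simpa using hmom 1)
  calc ∑' k : ℕ, ENNReal.ofReal (t ^ k / k ! * ∫ x, x ^ k ∂μ)
      ≤ ∑' k : ℕ, ENNReal.ofReal (t * C) ^ k := ENNReal.tsum_le_tsum fun k => by
        rw [← ENNReal.ofReal_pow (by positivity)]
        refine ENNReal.ofReal_le_ofReal ?_
        calc t ^ k / k ! * ∫ x, x ^ k ∂μ ≤ t ^ k / k ! * (C ^ k * k !) := by gcongr; exact hmom k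
          _ = (t * C) ^ k := by field_simp; ring
    _ < ⊤ := by
        rw [ENNReal.tsum_geometric, ENNReal.inv_lt_top]
        exact tsub_pos_of_lt (ENNReal.ofReal_lt_one.2 htC)

lemma zero_mem_interior_integrableExpSet_of_integral_pow_le [IsFiniteMeasure μ]
    (h0 : ∀ᵐ x ∂μ, 0 ≤ x) (hint : ∀ k : ℕ, Integrable (fun x : ℝ => x ^ k) μ) {C : ℝ}
    (hC : 0 < C) (hmom : ∀ k : ℕ, ∫ x, x ^ k ∂μ ≤ C ^ k * k !) :
    0 ∈ interior (integrableExpSet id μ) := by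
  have hIio : Set.Iio (1 / C) ⊆ integrableExpSet id μ := fun t ht =>
    integrable_exp_mul_of_integral_pow_le h0 hint hmom ((lt_div_iff₀ hC).1 ht)
  exact interior_mono hIio (by simpa [interior_Iio] using hC)

end ExponentialMoments

theorem AnalyticAt.eventuallyEq_of_iteratedDeriv_eq {𝕜 E : Type*} [NontriviallyNormedField 𝕜]
    [CharZero 𝕜] [NormedAddCommGroup E] [NormedSpace 𝕜 E] [CompleteSpace E] {f g : 𝕜 → E}
    {z₀ : 𝕜} (hf : AnalyticAt 𝕜 f z₀) (hg : AnalyticAt 𝕜 g z₀)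
    (h : ∀ n, iteratedDeriv n f z₀ = iteratedDeriv n g z₀) : f =ᶠ[𝓝 z₀] g := by
  have hzero : ∀ n, iteratedDeriv n (f - g) z₀ = 0 := fun n => by
    rw [iteratedDeriv_sub hf.contDiffAt hg.contDiffAt, h, sub_self]
  have htop : analyticOrderAt (f - g) z₀ = ⊤ := ENat.eq_top_iff_forall_ge.2 fun n =>
    (natCast_le_analyticOrderAt_iff_iteratedDeriv_eq_zero (hf.sub hg)).2 fun i _ => hzero i
  filter_upwards [analyticOrderAt_eq_top.1 htop] with z hz
  exact sub_eq_zero.1 hz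

lemma iteratedDeriv_complexMGF_zero {μ : Measure ℝ} (hμ : 0 ∈ interior (integrableExpSet id μ))
    (n : ℕ) : iteratedDeriv n (complexMGF id μ) 0 = ((∫ x, x ^ n ∂μ : ℝ) : ℂ) := by
  rw [iteratedDeriv_complexMGF (by simpa using hμ), ← integral_complex_ofReal]
  simp

theorem MeasureTheory.Measure.ext_of_integral_pow_eq {μ ν : Measure ℝ}
    [IsFiniteMeasure μ] [IsFiniteMeasure ν]
    (hμ : 0 ∈ interior (integrableExpSet id μ)) (hν : 0 ∈ interior (integrableExpSet id ν))
    (h : ∀ n : ℕ, ∫ x, x ^ n ∂μ = ∫ x, x ^ n ∂ν) : μ = ν := by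
  set S := interior (integrableExpSet id μ) ∩ interior (integrableExpSet id ν)
  set U : Set ℂ := Complex.re ⁻¹' S
  have hU : IsOpen U := (isOpen_interior.inter isOpen_interior).preimage Complex.continuous_re
  have hUconn : IsPreconnected U :=
    ((convex_integrableExpSet.interior.inter convex_integrableExpSet.interior).linear_preimage
      Complex.reLm).isPreconnected
  have h0U : (0 : ℂ) ∈ U := by simpa [U, S] using ⟨hμ, hν⟩
  have hfμ : AnalyticOnNhd ℂ (complexMGF id μ) U :=
    analyticOnNhd_complexMGF.mono fun z hz => hz.1
  have hfν : AnalyticOnNhd ℂ (complexMGF id ν) U :=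
    analyticOnNhd_complexMGF.mono fun z hz => hz.2
  have hnear : complexMGF id μ =ᶠ[𝓝 0] complexMGF id ν :=
    (hfμ 0 h0U).eventuallyEq_of_iteratedDeriv_eq (hfν 0 h0U) fun n => by
      rw [iteratedDeriv_complexMGF_zero hμ, iteratedDeriv_complexMGF_zero hν, h]
  have hEq := hfμ.eqOn_of_preconnected_of_eventuallyEq hfν hUconn h0U hnear
  refine Measure.ext_of_charFun (funext fun t => ?_)
  rw [← complexMGF_id_mul_I, ← complexMGF_id_mul_I]
  exact hEq (by simpa [U, S] using ⟨hμ, hν⟩)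

lemma zero_mem_interior_integrableExpSet_of_integral_pow_eq_truncMoment {c δ : ℝ}
    (hc : 1 / 2 < c) (hδ : 0 < δ) {μ : Measure ℝ} [IsProbabilityMeasure μ]
    (hμ0 : μ (Set.Iio 0) = 0) (hint : ∀ k : ℕ, 1 ≤ k → Integrable (fun x : ℝ => x ^ k) μ)
    (hμ : ∀ k : ℕ, 1 ≤ k → ∫ x, x ^ k ∂μ = truncMoment c δ k) :
    0 ∈ interior (integrableExpSet id μ) := by
  obtain ⟨C, hC, hbound⟩ := exists_truncMoment_le_pow_mul_factorial hc hδ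
  refine zero_mem_interior_integrableExpSet_of_integral_pow_le
    (ae_iff.2 (measure_mono_null (fun x hx => not_le.1 hx) hμ0)) (fun k => ?_) hC (fun k => ?_)
  all_goals rcases k.eq_zero_or_pos with rfl | hk
  · simp
  · exact hint k hk
  · simp
  · exact (hμ k hk).trans_le (hbound k)

/-- the moment sequence `(a_k)_{k ≥ 1}` of `T(c,δ)` determines a unique Borel
probability measure on the nonnegative real line. -/
theorem truncated_moments_determine_measure
    (c δ : ℝ) (hc : 1 / 2 < c) (hδ : 0 < δ)
    (μ ν : Measure ℝ) [IsProbabilityMeasure μ] [IsProbabilityMeasure ν]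
    (hμ0 : μ (Set.Iio 0) = 0) (hν0 : ν (Set.Iio 0) = 0)
    (hμint : ∀ k : ℕ, 1 ≤ k → Integrable (fun x : ℝ => x ^ k) μ)
    (hνint : ∀ k : ℕ, 1 ≤ k → Integrable (fun x : ℝ => x ^ k) ν)
    (hμ : ∀ k : ℕ, 1 ≤ k → ∫ x, x ^ k ∂μ = truncMoment c δ k)
    (hν : ∀ k : ℕ, 1 ≤ k → ∫ x, x ^ k ∂ν = truncMoment c δ k) :
    μ = ν := by
  refine Measure.ext_of_integral_pow_eq
    (zero_mem_interior_integrableExpSet_of_integral_pow_eq_truncMoment hc hδ hμ0 hμint hμ)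
    (zero_mem_interior_integrableExpSet_of_integral_pow_eq_truncMoment hc hδ hν0 hνint hν)
    fun k => ?_
  rcases k.eq_zero_or_pos with rfl | hk
  · simp
  · rw [hμ k hk, hν k hk]
end

section
/- Let 0 < δ ≤ 1 and ε > 0. Let f : [0,1] → ℝ be continuous and convex, and suppose there exist real numbers t, s with 0 ≤ t < s ≤ min(1, t+δ) such that |f(s) − f(t)| ≥ ε. Then |f(δ/2) − f(0)| ≥ ε/2 or |f(1) − f(1 − δ/2)| ≥ ε/2. -/
/-- Cross-multiplied slope monotonicity for a convex function on `[0,1]`. -/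
lemma slope_key_aux (f : ℝ → ℝ) (hconv : ConvexOn ℝ (Set.Icc (0 : ℝ) 1) f)
    {a b c d : ℝ} (ha : 0 ≤ a) (hd : d ≤ 1) (hab : a < b) (hcd : c < d)
    (hac : a ≤ c) (hbd : b ≤ d) :
    (f b - f a) * (d - c) ≤ (f d - f c) * (b - a) := by
  have hma : a ∈ Set.Icc (0:ℝ) 1 := ⟨ha, by linarith⟩
  have hmb : b ∈ Set.Icc (0:ℝ) 1 := ⟨by linarith, by linarith⟩
  have hmc : c ∈ Set.Icc (0:ℝ) 1 := ⟨by linarith, by linarith⟩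
  have hmd : d ∈ Set.Icc (0:ℝ) 1 := ⟨by linarith, hd⟩
  have h1 : (f b - f a) / (b - a) ≤ (f d - f a) / (d - a) :=
    hconv.secant_mono hma hmb hmd (by linarith) (by linarith) hbd
  have h2 : (f a - f d) / (a - d) ≤ (f c - f d) / (c - d) :=
    hconv.secant_mono hmd hma hmc (by intro h; exact absurd h (by linarith))
      (by intro h; exact absurd h (by linarith)) hac
  have h2' : (f d - f a) / (d - a) ≤ (f d - f c) / (d - c) := by
    have e1 : (f a - f d) / (a - d) = (f d - f a) / (d - a) := by
      rw [← neg_div_neg_eq]; ring_nf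
    have e2 : (f c - f d) / (c - d) = (f d - f c) / (d - c) := by
      rw [← neg_div_neg_eq]; ring_nf
    rw [e1, e2] at h2; exact h2
  have h3 : (f b - f a) / (b - a) ≤ (f d - f c) / (d - c) := h1.trans h2'
  rw [div_le_div_iff₀ (by linarith) (by linarith)] at h3
  exact h3

set_option maxHeartbeats 1000000 in
/-- if `f` is continuous and convex on `[0,1]`, `0 < δ ≤ 1`, `ε > 0`, and
`|f(s) - f(t)| ≥ ε` for some `0 ≤ t < s ≤ min(1, t + δ)`, then `|f(δ/2) - f(0)| ≥ ε/2` or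
`|f(1) - f(1 - δ/2)| ≥ ε/2`. -/
theorem convex_small_increment_lemma
    (δ ε : ℝ) (hδ0 : 0 < δ) (hδ1 : δ ≤ 1) (hε : 0 < ε)
    (f : ℝ → ℝ)
    (hconv : ConvexOn ℝ (Set.Icc (0 : ℝ) 1) f)
    (hcont : ContinuousOn f (Set.Icc (0 : ℝ) 1))
    (t s : ℝ) (ht : 0 ≤ t) (hts : t < s) (hs : s ≤ min 1 (t + δ))
    (hbig : ε ≤ |f s - f t|) :
    ε / 2 ≤ |f (δ / 2) - f 0| ∨ ε / 2 ≤ |f 1 - f (1 - δ / 2)| := by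
  obtain ⟨hs1, hs2⟩ := le_min_iff.mp hs
  by_contra hcon
  push_neg at hcon
  obtain ⟨h1, h2⟩ := hcon
  obtain ⟨h1a, h1b⟩ := abs_lt.mp h1
  obtain ⟨h2a, h2b⟩ := abs_lt.mp h2
  rcases le_or_gt t (1 - δ/2) with htc | htc
  · rcases le_or_gt (δ/2) s with hsc | hsc
    · -- Case A
      have hA := slope_key_aux f hconv (a := t) (b := s) (c := 1 - δ/2) (d := 1)
        ht le_rfl hts (by linarith) htc hs1
      have hB := slope_key_aux f hconv (a := 0) (b := δ/2) (c := t) (d := s)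
        le_rfl hs1 (by linarith) hts ht hsc
      have hub : f s - f t < ε := by nlinarith [sub_pos.mpr hts]
      have hlb : -ε < f s - f t := by nlinarith [sub_pos.mpr hts]
      rcases abs_cases (f s - f t) with ⟨he, _⟩ | ⟨he, _⟩ <;> rw [he] at hbig <;> linarith
    · -- Case B : s < δ/2
      have hA := slope_key_aux f hconv (a := t) (b := s) (c := 1 - δ/2) (d := 1)
        ht le_rfl hts (by linarith) (by linarith) hs1
      have hub : f s - f t < ε := by nlinarith [sub_pos.mpr hts]
      have hneg : f t - f s ≥ ε := by
        rcases abs_cases (f s - f t) with ⟨he, _⟩ | ⟨he, _⟩ <;> rw [he] at hbig <;> linarith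
      -- slope(0,s) ≤ slope(t,s)
      have hC := slope_key_aux f hconv (a := 0) (b := s) (c := t) (d := s)
        le_rfl hs1 (by linarith) hts ht le_rfl
      have hfs : f s - f 0 ≤ -ε := by nlinarith [sub_pos.mpr hts]
      -- slope(s, δ/2) ≤ slope(1-δ/2, 1)
      have hD := slope_key_aux f hconv (a := s) (b := δ/2) (c := 1 - δ/2) (d := 1)
        (by linarith) le_rfl hsc (by linarith) (by linarith) (by linarith)
      have hE : f (δ/2) - f s < ε/2 := by nlinarith
      linarith
  · -- Case C : t > 1 - δ/2
    have hδt : δ/2 ≤ t := by linarith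
    have hB := slope_key_aux f hconv (a := 0) (b := δ/2) (c := t) (d := s)
      le_rfl hs1 (by linarith) hts ht (by linarith)
    have hst : s - t ≤ δ/2 := by linarith
    have hlb : -(ε/2) ≤ f s - f t := by
      have e1 : -(ε/2) * (s - t) ≤ (f (δ/2) - f 0) * (s - t) :=
        mul_le_mul_of_nonneg_right h1a.le (by linarith)
      have e2 : -(ε/2) * (δ/2) ≤ -(ε/2) * (s - t) :=
        mul_le_mul_of_nonpos_left hst (by linarith)
      have e3 : -(ε/2) * (δ/2) ≤ (f s - f t) * (δ/2) := by linarith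
      exact le_of_mul_le_mul_right e3 (by linarith)
    have hpos : ε ≤ f s - f t := by
      rcases abs_cases (f s - f t) with ⟨he, _⟩ | ⟨he, _⟩ <;> rw [he] at hbig <;> linarith
    -- slope(t,s) ≤ slope(t,1)
    have hD := slope_key_aux f hconv (a := t) (b := s) (c := t) (d := 1)
      ht le_rfl hts (by linarith) le_rfl hs1
    have hf1t : ε ≤ f 1 - f t := by
      have e1 : ε * (s - t) ≤ ε * (1 - t) :=
        mul_le_mul_of_nonneg_left (by linarith) hε.le
      have e2 : ε * (1 - t) ≤ (f s - f t) * (1 - t) :=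
        mul_le_mul_of_nonneg_right hpos (by linarith)
      have e3 : ε * (s - t) ≤ (f 1 - f t) * (s - t) := by linarith
      exact le_of_mul_le_mul_right e3 (by linarith)
    -- slope(0,δ/2) ≤ slope(1-δ/2, t)
    have hE := slope_key_aux f hconv (a := 0) (b := δ/2) (c := 1 - δ/2) (d := t)
      le_rfl (by linarith) (by linarith) htc (by linarith) hδt
    have hF : -(ε/2) ≤ f t - f (1 - δ/2) := by
      have e1 : -(ε/2) * (t - (1 - δ/2)) ≤ (f (δ/2) - f 0) * (t - (1 - δ/2)) :=
        mul_le_mul_of_nonneg_right h1a.le (by linarith)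
      have e2 : -(ε/2) * (δ/2) ≤ -(ε/2) * (t - (1 - δ/2)) :=
        mul_le_mul_of_nonpos_left (by linarith) (by linarith)
      have e3 : -(ε/2) * (δ/2) ≤ (f t - f (1 - δ/2)) * (δ/2) := by linarith
      exact le_of_mul_le_mul_right e3 (by linarith)
    linarith
end

section
/- Let (P_n)_{n≥1} and P be Borel probability measures on the space C[0,1] of continuous real-valued functions on [0,1], equipped with the supremum metric. Assume that for every n, P_n-almost every f ∈ C[0,1] is convex on [0,1]. If all the finite-dimensional distributions of P_n converge weakly to those of P — that is, for every k ≥ 1 and all points t_1,…,t_k ∈ [0,1], the pushforward of P_n under the map f ↦ (f(t_1),…,f(t_k)) converges weakly (as probability measures on ℝ^k) to the corresponding pushforward of P — then P_n converges weakly to P as probability measures on C[0,1]. -/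
open MeasureTheory Filter

/-- Equip `C([0,1], ℝ)` (with the supremum metric) with its Borel σ-algebra. -/
noncomputable instance : MeasurableSpace C(Set.Icc (0 : ℝ) 1, ℝ) := borel _

instance : BorelSpace C(Set.Icc (0 : ℝ) 1, ℝ) := ⟨rfl⟩

/-!
Interpolate a path `f` piecewise linearly on the grid `i / (n + 1)`. The interpolant and the
largest second difference of `f` on the grid are continuous functions of finitely many values of
`f`, and for every continuous `f` the interpolants tend uniformly to `f` while the second
differences tend to zero. Convexity enters through one inequality only: for convex `f` the
interpolation error is at most the largest second difference. Hence, for a bounded Lipschitz `φ`,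
`|∫ φ dPₙ - ∫ φ ∘ interpolant dPₙ|` is bounded by the integral of a finite-dimensional functional,
so every term is controlled by the finite-dimensional distributions and by dominated convergence
under `Q`; this takes the place of tightness. Bounded Lipschitz test functions suffice for weak
convergence.
-/

open Topology Set NNReal BoundedContinuousFunction

theorem ConvexOn.add_mul_sub_le {s : Set ℝ} {g : ℝ → ℝ} (hg : ConvexOn ℝ s g) {x y z r : ℝ}
    (hx : x ∈ s) (hz : z ∈ s) (hr : 0 ≤ r) (hxyz : z - y = r * (y - x)) :
    g y + r * (g y - g x) ≤ g z := by
  obtain rfl : z = y + r * (y - x) := by linarith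
  have hr₁ : 0 < 1 + r := by linarith
  have hy := hg.2 hx hz (div_nonneg hr hr₁.le) (div_nonneg zero_le_one hr₁.le)
    (by field_simp; ring)
  have hcomb : (r / (1 + r)) • x + (1 / (1 + r)) • (y + r * (y - x)) = y := by
    simp only [smul_eq_mul]
    field_simp
    ring
  rw [hcomb, smul_eq_mul, smul_eq_mul] at hy
  have := mul_le_mul_of_nonneg_left hy hr₁.le
  field_simp at this
  linarith

theorem UniformContinuous.eventually_dist_le {α β : Type*} [PseudoMetricSpace α]
    [PseudoMetricSpace β] {f : α → β} (hf : UniformContinuous f) {ε : ℝ} (hε : 0 < ε) :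
    ∀ᶠ n : ℕ in atTop, ∀ u v, dist u v ≤ 1 / (n + 1) → dist (f u) (f v) ≤ ε := by
  obtain ⟨δ, hδ, hfδ⟩ := Metric.uniformContinuous_iff.1 hf ε hε
  filter_upwards [tendsto_one_div_add_atTop_nhds_zero_nat.eventually (gt_mem_nhds hδ)]
    with n hn u v huv using (hfδ (huv.trans_lt hn)).le

theorem tendsto_of_tendsto_of_dist_le {ι κ α : Type*} [PseudoMetricSpace α]
    {l : Filter ι} {l' : Filter κ} [l'.NeBot] {a : ι → α} {A : α} {b : κ → ι → α} {B : κ → α}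
    {c : κ → ι → ℝ} {C : κ → ℝ} (hb : ∀ k, Tendsto (b k) l (𝓝 (B k)))
    (hc : ∀ k, Tendsto (c k) l (𝓝 (C k))) (hB : Tendsto B l' (𝓝 A)) (hC : Tendsto C l' (𝓝 0))
    (hab : ∀ᶠ k in l', ∀ i, dist (a i) (b k i) ≤ c k i) : Tendsto a l (𝓝 A) := by
  refine Metric.tendsto_nhds.2 fun ε hε => ?_
  obtain ⟨k, hBk, hCk, habk⟩ := ((Metric.tendsto_nhds.1 hB (ε / 4) (by positivity)).and
    ((hC.eventually (gt_mem_nhds (by positivity : (0 : ℝ) < ε / 4))).and hab)).exists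
  filter_upwards [Metric.tendsto_nhds.1 (hb k) (ε / 4) (by positivity),
    (hc k).eventually (gt_mem_nhds (lt_add_of_pos_right (C k) (by positivity : 0 < ε / 4)))]
    with i hbi hci
  calc dist (a i) A ≤ dist (a i) (b k i) + dist (b k i) (B k) + dist (B k) A :=
        dist_triangle4 _ _ _ _
    _ < ε := by linarith [habk i]

namespace unitInterval

noncomputable section

def gridPoint (n : ℕ) (i : Fin (n + 2)) : unitInterval :=
  ⟨i / (n + 1), div_mem i.val.cast_nonneg (by positivity) (by exact_mod_cast i.is_le)⟩

theorem coe_gridPoint (n : ℕ) (i : Fin (n + 2)) : (gridPoint n i : ℝ) = i / (n + 1) := rfl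

theorem dist_gridPoint_le {n : ℕ} (k : Fin (n + 2)) {t : unitInterval} {s : ℝ}
    (ht : (t : ℝ) = s / (n + 1)) (hks : |(k : ℝ) - s| ≤ 1) :
    dist (gridPoint n k) t ≤ 1 / (n + 1) := by
  rw [Subtype.dist_eq, Real.dist_eq, coe_gridPoint, ht, div_sub_div_same, abs_div,
    abs_of_pos (by positivity : (0 : ℝ) < n + 1)]
  gcongr

def sample (n : ℕ) (f : C(unitInterval, ℝ)) : Fin (n + 2) → ℝ :=
  fun i => f (gridPoint n i)

theorem continuous_sample (n : ℕ) : Continuous (sample n) :=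
  continuous_pi fun i => continuous_eval_const (gridPoint n i)

def hat (n j : ℕ) : C(unitInterval, ℝ) :=
  ⟨fun t => max 0 (1 - |((n : ℝ) + 1) * t - j|), by fun_prop⟩

/-- The piecewise-linear function taking the value `x i` at `gridPoint n i`. -/
def piecewiseLinear (n : ℕ) (x : Fin (n + 2) → ℝ) : C(unitInterval, ℝ) :=
  ∑ j, x j • hat n j

theorem continuous_piecewiseLinear (n : ℕ) : Continuous (piecewiseLinear n) :=
  continuous_finsetSum _ fun j _ => (continuous_apply j).smul continuous_const

theorem piecewiseLinear_apply_of_le {n : ℕ} (x : Fin (n + 2) → ℝ) (i : Fin (n + 1))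
    {t : unitInterval} (h₁ : i ≤ (n + 1) * (t : ℝ)) (h₂ : (n + 1) * (t : ℝ) ≤ i + 1) :
    piecewiseLinear n x t =
      (1 - ((n + 1) * t - i)) * x i.castSucc + ((n + 1) * t - i) * x i.succ := by
  have hat_eq_zero (j : Fin (n + 2)) (hj : j ≠ i.castSucc ∧ j ≠ i.succ) : hat n j t = 0 := by
    have hj' : (j : ℝ) + 1 ≤ i ∨ (i : ℝ) + 2 ≤ j := by
      have h₁ := Fin.val_ne_of_ne hj.1
      have h₂ := Fin.val_ne_of_ne hj.2
      rw [Fin.val_castSucc] at h₁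
      rw [Fin.val_succ] at h₂
      exact_mod_cast (by omega : (j : ℕ) + 1 ≤ i ∨ (i : ℕ) + 2 ≤ j)
    refine max_eq_left (sub_nonpos.2 (le_abs.2 ?_))
    rcases hj' with hj' | hj'
    · exact Or.inl (by linarith)
    · exact Or.inr (by linarith)
  simp only [piecewiseLinear, ContinuousMap.coe_sum, ContinuousMap.coe_smul, Finset.sum_apply,
    Pi.smul_apply, smul_eq_mul]
  rw [Fintype.sum_eq_add i.castSucc i.succ Fin.castSucc_lt_succ.ne fun j hj => by
    rw [hat_eq_zero j hj, mul_zero]]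
  simp only [hat, ContinuousMap.coe_mk, Fin.val_castSucc, Fin.val_succ, Nat.cast_add,
    Nat.cast_one]
  rw [abs_of_nonneg (by linarith), abs_of_nonpos (by linarith), max_eq_right (by linarith),
    max_eq_right (by linarith)]
  ring

theorem exists_le_mul_le (n : ℕ) (t : unitInterval) :
    ∃ i : Fin (n + 1), (i : ℝ) ≤ (n + 1) * t ∧ (n + 1) * (t : ℝ) ≤ i + 1 := by
  have ht₀ : 0 ≤ (n + 1) * (t : ℝ) := mul_nonneg (by positivity) t.2.1
  have ht₁ : (n + 1) * (t : ℝ) ≤ n + 1 := mul_le_of_le_one_right (by positivity) t.2.2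
  refine ⟨⟨min ⌊(n + 1) * (t : ℝ)⌋₊ n, by omega⟩, ?_, ?_⟩
  · exact (Nat.cast_le.2 (min_le_left _ _)).trans (Nat.floor_le ht₀)
  · rcases le_total ⌊(n + 1) * (t : ℝ)⌋₊ n with h | h
    · simpa [min_eq_left h] using (Nat.lt_floor_add_one _).le
    · simpa [min_eq_right h] using ht₁

theorem exists_piecewiseLinear_apply_eq (n : ℕ) (t : unitInterval) :
    ∃ (i : Fin (n + 1)) (θ : ℝ), θ ∈ Icc 0 1 ∧ (t : ℝ) = (i + θ) / (n + 1) ∧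
      ∀ x, piecewiseLinear n x t = (1 - θ) * x i.castSucc + θ * x i.succ := by
  obtain ⟨i, h₁, h₂⟩ := exists_le_mul_le n t
  exact ⟨i, (n + 1) * t - i, ⟨by linarith, by linarith⟩, by field_simp; ring,
    fun x => piecewiseLinear_apply_of_le x i h₁ h₂⟩

theorem dist_piecewiseLinear_sample_le {n : ℕ} {f : C(unitInterval, ℝ)} {c : ℝ}
    (hc : ∀ u v, dist u v ≤ 1 / (n + 1) → dist (f u) (f v) ≤ c) :
    dist (piecewiseLinear n (sample n f)) f ≤ c := by
  have hc₀ : 0 ≤ c := dist_nonneg.trans (hc 0 0 (by rw [dist_self]; positivity))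
  refine (ContinuousMap.dist_le hc₀).2 fun t => ?_
  obtain ⟨i, θ, hθ, ht, hrep⟩ := exists_piecewiseLinear_apply_eq n t
  have hnode (k : Fin (n + 2)) (hk : |(k : ℝ) - (i + θ)| ≤ 1) :
      sample n f k ∈ Metric.closedBall (f t) c :=
    hc _ _ (dist_gridPoint_le k ht hk)
  rw [hrep, ← Metric.mem_closedBall]
  refine convex_closedBall (f t) c (hnode _ ?_) (hnode _ ?_) (sub_nonneg.2 hθ.2) hθ.1 (by ring)
  · rw [Fin.val_castSucc, abs_le]
    constructor <;> linarith [hθ.1, hθ.2]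
  · rw [Fin.val_succ, abs_le]
    push_cast
    constructor <;> linarith [hθ.1, hθ.2]

theorem tendsto_piecewiseLinear_sample (f : C(unitInterval, ℝ)) :
    Tendsto (fun n => piecewiseLinear n (sample n f)) atTop (𝓝 f) := by
  have huc := CompactSpace.uniformContinuous_of_continuous f.continuous
  refine Metric.tendsto_nhds.2 fun ε hε => ?_
  filter_upwards [huc.eventually_dist_le (half_pos hε)] with n hn
  exact (dist_piecewiseLinear_sample_le hn).trans_lt (half_lt_self hε)

def secondDiff {n : ℕ} (x : Fin (n + 2) → ℝ) : Fin n → ℝ :=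
  fun j => x j.succ.succ - 2 * x j.succ.castSucc + x j.castSucc.castSucc

theorem continuous_secondDiff (n : ℕ) : Continuous (secondDiff (n := n)) := by
  unfold secondDiff
  fun_prop

theorem norm_secondDiff_sample_le {n : ℕ} {f : C(unitInterval, ℝ)} {c : ℝ}
    (hc : ∀ u v, dist u v ≤ 1 / (n + 1) → dist (f u) (f v) ≤ c) :
    ‖secondDiff (sample n f)‖ ≤ 2 * c := by
  have hc₀ : 0 ≤ c := dist_nonneg.trans (hc 0 0 (by rw [dist_self]; positivity))
  refine (pi_norm_le_iff_of_nonneg (by positivity)).2 fun j => ?_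
  have h₁ := hc _ _ (dist_gridPoint_le (n := n) j.succ.succ (t := gridPoint n j.succ.castSucc)
    rfl (by simp))
  have h₂ := hc _ _ (dist_gridPoint_le (n := n) j.castSucc.castSucc
    (t := gridPoint n j.succ.castSucc) rfl (by simp))
  rw [Real.dist_eq, abs_le] at h₁ h₂
  rw [Real.norm_eq_abs, abs_le]
  simp only [secondDiff, sample]
  constructor <;> linarith [h₁.1, h₁.2, h₂.1, h₂.2]

theorem tendsto_norm_secondDiff_sample (f : C(unitInterval, ℝ)) :
    Tendsto (fun n => ‖secondDiff (sample n f)‖) atTop (𝓝 0) := by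
  have huc := CompactSpace.uniformContinuous_of_continuous f.continuous
  refine Metric.tendsto_nhds.2 fun ε hε => ?_
  filter_upwards [huc.eventually_dist_le (by positivity : 0 < ε / 4)] with n hn
  rw [dist_zero_right, norm_norm]
  linarith [norm_secondDiff_sample_le hn]

theorem apply_le_piecewiseLinear_sample_of_convexOn {n : ℕ} {f : C(unitInterval, ℝ)}
    (hf : ConvexOn ℝ (Icc 0 1) (IccExtend zero_le_one f)) (t : unitInterval) :
    f t ≤ piecewiseLinear n (sample n f) t := by
  obtain ⟨i, θ, hθ, ht, hrep⟩ := exists_piecewiseLinear_apply_eq n t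
  have hconv := hf.2 (gridPoint n i.castSucc).2 (gridPoint n i.succ).2 (sub_nonneg.2 hθ.2) hθ.1
    (by ring)
  have ht' : (1 - θ) • (gridPoint n i.castSucc : ℝ) + θ • (gridPoint n i.succ : ℝ) = t := by
    simp only [smul_eq_mul, coe_gridPoint, Fin.val_castSucc, Fin.val_succ, ht]
    push_cast
    field_simp
    ring
  rw [ht', IccExtend_val, IccExtend_val, IccExtend_val] at hconv
  simpa only [hrep, sample, smul_eq_mul] using hconv

/-- On each cell a convex function lies above the extensions of the chords of the neighbouring
cells; on the first cell the neighbour on the right is used, which needs `n ≠ 0`. -/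
theorem dist_piecewiseLinear_sample_le_of_convexOn {n : ℕ} (hn : n ≠ 0) {f : C(unitInterval, ℝ)}
    (hf : ConvexOn ℝ (Icc 0 1) (IccExtend zero_le_one f)) :
    dist (piecewiseLinear n (sample n f)) f ≤ ‖secondDiff (sample n f)‖ := by
  refine (ContinuousMap.dist_le (norm_nonneg _)).2 fun t => ?_
  obtain ⟨i, θ, hθ, ht, hrep⟩ := exists_piecewiseLinear_apply_eq n t
  have hg (s : unitInterval) : IccExtend zero_le_one f s = f s := IccExtend_val _ _ _
  have hD (j : Fin n) : secondDiff (sample n f) j ≤ ‖secondDiff (sample n f)‖ :=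
    (le_abs_self _).trans (norm_le_pi_norm (secondDiff (sample n f)) j)
  have hD₀ := norm_nonneg (secondDiff (sample n f))
  have hextend (k l : Fin (n + 2)) {r : ℝ} (hr : 0 ≤ r)
      (hkl : (t : ℝ) - l / (n + 1) = r * ((l - k) / (n + 1))) :
      sample n f l + r * (sample n f l - sample n f k) ≤ f t := by
    simpa only [hg, sample] using hf.add_mul_sub_le (y := gridPoint n l) (gridPoint n k).2 t.2 hr
      (by rw [coe_gridPoint, coe_gridPoint]; linear_combination hkl)
  have hchord := apply_le_piecewiseLinear_sample_of_convexOn (n := n) hf t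
  rw [hrep] at hchord
  have hchord_sub : (1 - θ) * sample n f i.castSucc + θ * sample n f i.succ - f t ≤
      ‖secondDiff (sample n f)‖ := by
    rcases Fin.eq_zero_or_eq_succ i with rfl | ⟨j, rfl⟩
    · set j : Fin n := ⟨0, Nat.pos_of_ne_zero hn⟩
      have h₀ : (0 : Fin (n + 1)).castSucc = j.castSucc.castSucc := by ext; simp [j]
      have h₁ : (0 : Fin (n + 1)).succ = j.succ.castSucc := by ext; simp [j]
      have hext := hextend j.succ.succ j.succ.castSucc (sub_nonneg.2 hθ.2) (by
        simp only [j, ht, Fin.val_succ, Fin.val_castSucc, Fin.val_zero]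
        push_cast
        field_simp
        ring)
      have hDj := hD j
      rw [h₀, h₁]
      simp only [secondDiff] at hDj
      linarith [mul_le_mul_of_nonneg_left hDj (sub_nonneg.2 hθ.2), mul_nonneg hθ.1 hD₀]
    · have hext := hextend j.castSucc.castSucc j.succ.castSucc hθ.1 (by
        simp only [ht, Fin.val_succ, Fin.val_castSucc]
        push_cast
        field_simp
        ring)
      have hDj := hD j
      simp only [secondDiff] at hDj
      linarith [mul_le_mul_of_nonneg_left hDj hθ.1, mul_nonneg (sub_nonneg.2 hθ.2) hD₀]
  rw [hrep, Real.dist_eq, abs_le]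
  constructor <;> linarith

def secondDiffBound (n : ℕ) (M L : ℝ≥0) : (Fin (n + 2) → ℝ) →ᵇ ℝ :=
  .ofNormedAddCommGroup (fun x => min (M : ℝ) (L * ‖secondDiff x‖))
    (continuous_const.min (continuous_const.mul (continuous_secondDiff n).norm)) M fun x => by
      have h₀ : 0 ≤ min (M : ℝ) (L * ‖secondDiff x‖) := le_min M.2 (by positivity)
      rw [Real.norm_eq_abs, abs_of_nonneg h₀]
      exact min_le_left _ _

theorem tendsto_secondDiffBound_sample (M L : ℝ≥0) (f : C(unitInterval, ℝ)) :
    Tendsto (fun n => secondDiffBound n M L (sample n f)) atTop (𝓝 0) := by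
  simpa [secondDiffBound] using (tendsto_const_nhds (x := (M : ℝ))).min
    ((tendsto_norm_secondDiff_sample f).const_mul (L : ℝ))

theorem dist_le_secondDiffBound {φ : C(unitInterval, ℝ) →ᵇ ℝ} {L : ℝ≥0}
    (hφ : LipschitzWith L φ) {n : ℕ} (hn : n ≠ 0) {f : C(unitInterval, ℝ)}
    (hf : ConvexOn ℝ (Icc 0 1) (IccExtend zero_le_one f)) :
    dist (φ f) (φ (piecewiseLinear n (sample n f))) ≤
      secondDiffBound n (2 * ‖φ‖₊) L (sample n f) := by
  refine le_min (by simpa using φ.dist_le_two_norm _ _) ((hφ.dist_le_mul _ _).trans ?_)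
  rw [dist_comm]
  gcongr
  exact dist_piecewiseLinear_sample_le_of_convexOn hn hf

end

end unitInterval

open unitInterval in
theorem tendsto_integral_of_lipschitzWith_of_ae_convexOn {ι : Type*} {l : Filter ι}
    (P : ι → Measure C(unitInterval, ℝ)) (Q : Measure C(unitInterval, ℝ))
    [∀ i, IsFiniteMeasure (P i)] [IsFiniteMeasure Q]
    (hconv : ∀ i, ∀ᵐ f : C(unitInterval, ℝ) ∂P i,
      ConvexOn ℝ (Icc 0 1) (IccExtend zero_le_one f))
    (hfdd : ∀ n (ψ : (Fin (n + 2) → ℝ) →ᵇ ℝ),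
      Tendsto (fun i => ∫ f, ψ (sample n f) ∂P i) l (𝓝 (∫ f, ψ (sample n f) ∂Q)))
    (φ : C(unitInterval, ℝ) →ᵇ ℝ) {L : ℝ≥0} (hφ : LipschitzWith L φ) :
    Tendsto (fun i => ∫ f, φ f ∂P i) l (𝓝 (∫ f, φ f ∂Q)) := by
  let Φ (n : ℕ) : (Fin (n + 2) → ℝ) →ᵇ ℝ :=
    φ.compContinuous ⟨piecewiseLinear n, continuous_piecewiseLinear n⟩
  let E (n : ℕ) : (Fin (n + 2) → ℝ) →ᵇ ℝ := secondDiffBound n (2 * ‖φ‖₊) L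
  have integrable_sample (μ : Measure C(unitInterval, ℝ)) [IsFiniteMeasure μ] (n : ℕ)
      (ψ : (Fin (n + 2) → ℝ) →ᵇ ℝ) : Integrable (fun f => ψ (sample n f)) μ :=
    (ψ.compContinuous ⟨sample n, continuous_sample n⟩).integrable μ
  refine tendsto_of_tendsto_of_dist_le (l' := atTop) (fun n => hfdd n (Φ n))
    (fun n => hfdd n (E n)) ?_ ?_ ?_
  · exact tendsto_integral_filter_of_norm_le_const
      (.of_forall fun n => (integrable_sample Q n (Φ n)).1)
      ⟨‖φ‖, .of_forall fun n => .of_forall fun f => φ.norm_coe_le_norm _⟩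
      (.of_forall fun f => (φ.continuous.tendsto f).comp (tendsto_piecewiseLinear_sample f))
  · simpa using tendsto_integral_filter_of_norm_le_const (μ := Q) (f := fun _ => (0 : ℝ))
      (.of_forall fun n => (integrable_sample Q n (E n)).1)
      ⟨(2 * ‖φ‖₊ : ℝ≥0), .of_forall fun n => .of_forall fun f => ((E n).norm_coe_le_norm _).trans
        (norm_ofNormedAddCommGroup_le _ (by positivity) _)⟩
      (.of_forall fun f => tendsto_secondDiffBound_sample _ _ f)
  · filter_upwards [eventually_ne_atTop 0] with n hn i
    rw [dist_eq_norm, ← integral_sub (φ.integrable _) (integrable_sample _ n (Φ n))]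
    exact norm_integral_le_of_norm_le (integrable_sample _ n (E n)) ((hconv i).mono fun f hf =>
      (dist_eq_norm _ _).symm.trans_le (dist_le_secondDiffBound hφ hn hf))

/-- let `P_n`, `P` be Borel probability measures on `C[0,1]` such that for
every `n`, `P_n`-almost every `f` is convex on `[0,1]`. If all finite-dimensional
distributions of `P_n` converge weakly to those of `P`, then `P_n` converges weakly to
`P` (i.e. the integrals of every bounded continuous function converge). -/
theorem convex_random_functions_weak_convergence
    (P : ℕ → Measure C(Set.Icc (0 : ℝ) 1, ℝ))
    (Q : Measure C(Set.Icc (0 : ℝ) 1, ℝ))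
    [∀ n, IsProbabilityMeasure (P n)] [IsProbabilityMeasure Q]
    (hconv : ∀ n, ∀ᵐ f ∂(P n),
      ConvexOn ℝ (Set.Icc (0 : ℝ) 1) (Set.IccExtend (zero_le_one : (0:ℝ) ≤ 1) (f : C(Set.Icc (0 : ℝ) 1, ℝ))))
    (hfdd : ∀ (k : ℕ) (t : Fin k → Set.Icc (0 : ℝ) 1)
        (ψ : BoundedContinuousFunction (Fin k → ℝ) ℝ),
      Tendsto (fun n => ∫ f, ψ (fun i => f (t i)) ∂(P n)) atTop
        (nhds (∫ f, ψ (fun i => f (t i)) ∂Q))) :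
    ∀ φ : BoundedContinuousFunction C(Set.Icc (0 : ℝ) 1, ℝ) ℝ,
      Tendsto (fun n => ∫ f, φ f ∂(P n)) atTop (nhds (∫ f, φ f ∂Q)) := by
  let μ (n : ℕ) : ProbabilityMeasure C(unitInterval, ℝ) := ⟨P n, inferInstance⟩
  have hμ : Tendsto μ atTop (𝓝 ⟨Q, inferInstance⟩) :=
    tendsto_iff_forall_lipschitz_integral_tendsto.2 fun g ⟨C, hC⟩ ⟨L, hL⟩ =>
      tendsto_integral_of_lipschitzWith_of_ae_convexOn P Q hconv
        (fun n => hfdd (n + 2) (unitInterval.gridPoint n)) (.mkOfBound ⟨g, hL.continuous⟩ C hC) hL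
  exact ProbabilityMeasure.tendsto_iff_forall_integral_tendsto.1 hμ
end
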